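/- Let T > 0, r ∈ ℝ, σ̄ > 0, K > 0, 0 ≤ t < T, and s, u ∈ ℝ. With d̂₂ = (u/T + s − ln K + (r − σ̄²/2)(T − t)²/(2T)) / ((σ̄/T)√((T − t)³/3)), d̂₁ = d̂₂ + (σ̄/T)√((T − t)³/3), and Q = (r + σ̄²/2)(T² − t²)/(2T) − σ̄²(T³ − t³)/(6T²), the standard normal density Φ satisfies the identity e^{s + u/T − Q} Φ(d̂₁) = K e^{−r(T−t)} Φ(d̂₂). -/
import Mathlib


/-- Partial derivative in the first (time) variable. -/
noncomputable def pdT (F : ℝ → ℝ → ℝ → ℝ) (t s u : ℝ) : ℝ := deriv (fun x => F x s u) t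

/-- Partial derivative in the second (log-price) variable. -/
noncomputable def pdS (F : ℝ → ℝ → ℝ → ℝ) (t s u : ℝ) : ℝ := deriv (fun x => F t x u) s

/-- Partial derivative in the third (average) variable. -/
noncomputable def pdU (F : ℝ → ℝ → ℝ → ℝ) (t s u : ℝ) : ℝ := deriv (fun x => F t s x) u

/-- Standard normal cumulative distribution function. -/
noncomputable def stdN (x : ℝ) : ℝ :=
  ∫ y in Set.Iic x, Real.exp (-(y ^ 2) / 2) / Real.sqrt (2 * Real.pi)

/-- Standard normal probability density function. -/
noncomputable def stdPhi (x : ℝ) : ℝ := Real.exp (-(x ^ 2) / 2) / Real.sqrt (2 * Real.pi)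

/-- `d₁` for the floating-strike geometric Asian call. -/
noncomputable def dOne (T r σ t u : ℝ) : ℝ :=
  (-u + (r + σ ^ 2 / 2) * (T ^ 2 - t ^ 2) / 2) / (σ * Real.sqrt ((T ^ 3 - t ^ 3) / 3))

/-- `d₂` for the floating-strike geometric Asian call. -/
noncomputable def dTwo (T r σ t u : ℝ) : ℝ :=
  dOne T r σ t u - (σ / T) * Real.sqrt ((T ^ 3 - t ^ 3) / 3)

/-- The quantity `Q` appearing in the geometric Asian option formulas. -/
noncomputable def Qfl (T r σ t : ℝ) : ℝ :=
  (r + σ ^ 2 / 2) * (T ^ 2 - t ^ 2) / (2 * T) - σ ^ 2 * (T ^ 3 - t ^ 3) / (6 * T ^ 2)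

/-- `d̂₂` for the fixed-strike geometric Asian option. -/
noncomputable def dHatTwo (T r σ K t s u : ℝ) : ℝ :=
  (u / T + s - Real.log K + (r - σ ^ 2 / 2) * (T - t) ^ 2 / (2 * T)) /
    ((σ / T) * Real.sqrt ((T - t) ^ 3 / 3))

/-- `d̂₁` for the fixed-strike geometric Asian option. -/
noncomputable def dHatOne (T r σ K t s u : ℝ) : ℝ :=
  dHatTwo T r σ K t s u + (σ / T) * Real.sqrt ((T - t) ^ 3 / 3)

theorem stmt7 (T r σ K t s u : ℝ) (hT : 0 < T) (hσ : 0 < σ) (hK : 0 < K)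
    (ht0 : 0 ≤ t) (htT : t < T) :
    Real.exp (s + u / T - Qfl T r σ t) * stdPhi (dHatOne T r σ K t s u) =
      K * Real.exp (-(r * (T - t))) * stdPhi (dHatTwo T r σ K t s u) := by
  have hTt : 0 < T - t := by linarith
  have h3 : (0:ℝ) < (T - t) ^ 3 / 3 := by positivity
  set v : ℝ := (σ / T) * Real.sqrt ((T - t) ^ 3 / 3) with hv
  have hvpos : 0 < v := by
    rw [hv]; positivity
  have hv2 : v ^ 2 = σ ^ 2 * (T - t) ^ 3 / (3 * T ^ 2) := by
    rw [hv, mul_pow, Real.sq_sqrt h3.le, div_pow]; ring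
  set m : ℝ := u / T + s - Real.log K + (r - σ ^ 2 / 2) * (T - t) ^ 2 / (2 * T) with hm
  have hd2 : dHatTwo T r σ K t s u = m / v := rfl
  have hd1 : dHatOne T r σ K t s u = m / v + v := rfl
  have key : s + u / T - Qfl T r σ t + -(m / v + v) ^ 2 / 2 =
      Real.log K + -(r * (T - t)) + -(m / v) ^ 2 / 2 := by
    have hmv : m / v * v = m := div_mul_cancel₀ m hvpos.ne'
    have expand : (m / v + v) ^ 2 = (m / v) ^ 2 + 2 * (m / v * v) + v ^ 2 := by ring
    rw [expand, hmv, hv2, hm]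
    unfold Qfl
    field_simp
    ring
  rw [hd1, hd2]
  unfold stdPhi
  rw [show K = Real.exp (Real.log K) from (Real.exp_log hK).symm]
  rw [← mul_div_assoc, ← mul_div_assoc, ← Real.exp_add, ← Real.exp_add, ← Real.exp_add]
  congr 2
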